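/- For every integer d ≥ 1, let s_d = c · (a¹b)(a²b)⋯(a^d b) be the string over {a,b,c} consisting of the symbol c followed by, for i = 1 to d, i copies of a and one b. Then for every k with 1 ≤ k ≤ |s_d|, the number of distinct substrings of s_d of length k is at most d·k + 2. Consequently, max over k of (number of distinct length-k substrings of s_d)/k is at most d + 2. -/
import Mathlib

/-- The three-letter alphabet {a, b, c}. -/
inductive ABC : Type
  | a | b | c
deriving DecidableEq

/-- The string s_d = c · (a¹b)(a²b)⋯(a^d b). -/
def sWord (d : ℕ) : List ABC :=
  ABC.c :: (List.range d).flatMap (fun i => List.replicate (i + 1) ABC.a ++ [ABC.b])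

/-- The number of distinct length-k substrings of s. -/
def numSubstr (s : List ABC) (k : ℕ) : ℕ :=
  ((Finset.range (s.length - k + 1)).image (fun p => (s.drop p).take k)).card

/-- Position of the j-th `b` in `sWord d` (1-indexed), as long as `j ≤ d`. -/
def pb : ℕ → ℕ
  | 0 => 0
  | j+1 => pb j + (j+2)

lemma sWord_succ (d : ℕ) :
    sWord (d+1) = sWord d ++ (List.replicate (d+1) ABC.a ++ [ABC.b]) := by
  simp [sWord, List.range_succ]

lemma length_sWord (d : ℕ) : (sWord d).length = pb d + 1 := by
  induction d with
  | zero => simp [sWord, pb]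
  | succ n ih => simp [sWord_succ, ih, pb]; ring

lemma count_sWord (d : ℕ) : (sWord d).count ABC.b = d := by
  induction d with
  | zero => simp [sWord]
  | succ n ih => simp [sWord_succ, List.count_append, ih, List.count_replicate]

lemma mem_drop_one (d : ℕ) : ∀ x ∈ (sWord d).drop 1, x = ABC.a ∨ x = ABC.b := by
  induction d with
  | zero => simp [sWord]
  | succ n ih =>
    intro x hx
    rw [sWord_succ, List.drop_append_of_le_length (by simp [length_sWord])] at hx
    rcases List.mem_append.1 hx with h | h
    · exact ih x h
    · rcases List.mem_append.1 h with h | h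
      · exact Or.inl (List.eq_of_mem_replicate h)
      · simp at h; exact Or.inr h

lemma getB (d : ℕ) : ∀ q, q < (sWord d).length → (sWord d)[q]? = some ABC.b →
    pb (((sWord d).take (q+1)).count ABC.b) = q := by
  induction d with
  | zero =>
    intro q h hb
    have : q = 0 := by simpa [sWord] using h
    subst this
    simp [sWord] at hb
  | succ n ih =>
    intro q h hb
    by_cases hq : q < (sWord n).length
    · rw [sWord_succ] at hb ⊢
      rw [List.getElem?_append_left hq] at hb
      rw [List.take_append_of_le_length (by omega)]
      exact ih q hq hb
    · rw [sWord_succ] at hb h ⊢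
      rw [List.getElem?_append_right (by omega)] at hb
      have hlen : (sWord n).length = pb n + 1 := length_sWord n
      simp only [List.length_append] at h
      by_cases hq2 : q - (sWord n).length < n + 1
      · rw [List.getElem?_append_left (by simpa using hq2)] at hb
        rw [List.getElem?_replicate] at hb
        simp [hq2] at hb
      · have hq3 : q = (sWord n).length + (n+1) := by
          simp [List.length_replicate] at h; omega
        have : q + 1 = ((sWord n) ++ (List.replicate (n+1) ABC.a ++ [ABC.b])).length := by
          simp; omega
        rw [this, List.take_length]
        rw [List.count_append, List.count_append, count_sWord, List.count_replicate]
        simp [hq3, hlen, pb]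
        omega

/-- The length-k substring of `sWord d` starting at position p. -/
def wsub (d k p : ℕ) : List ABC := ((sWord d).drop p).take k

/-- Encoding of the substring starting at p into a number < d*k+2. -/
def code (d k p : ℕ) : ℕ :=
  if p = 0 then d*k
  else if ABC.b ∈ wsub d k p then
    d * ((wsub d k p).idxOf ABC.b)
      + (((sWord d).take (p + (wsub d k p).idxOf ABC.b + 1)).count ABC.b - 1)
  else d*k+1

/-- Decoding a code back into a substring. -/
def deco (d k c : ℕ) : List ABC :=
  if c = d*k then (sWord d).take k
  else if c = d*k+1 then List.replicate k ABC.a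
  else (List.replicate (c / d) ABC.a ++ ABC.b :: (sWord d).drop (pb (c % d + 1) + 1)).take k

lemma main_lemma (d k : ℕ) (hd : 1 ≤ d) (hk : 1 ≤ k) (hkl : k ≤ (sWord d).length)
    (p : ℕ) (hp : p < (sWord d).length - k + 1) :
    code d k p < d * k + 2 ∧ deco d k (code d k p) = wsub d k p := by
  have hlenp : p + k ≤ (sWord d).length := by omega
  by_cases hp0 : p = 0
  · subst hp0
    refine ⟨by simp [code], ?_⟩
    simp [code, deco, wsub]
  · by_cases hb : ABC.b ∈ wsub d k p
    · -- substring contains a b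
      have hwlen : (wsub d k p).length = k := by
        simp only [wsub, List.length_take, List.length_drop]; omega
      set w := wsub d k p with hw
      set o := w.idxOf ABC.b with hoo
      have ho : o < k := by
        have := List.idxOf_lt_length_iff.2 hb
        omega
      have hpo : p + o < (sWord d).length := by omega
      have hwo : o < w.length := by omega
      have hgo : w[o] = ABC.b := List.getElem_idxOf hwo
      have hso : (sWord d)[p+o]'hpo = ABC.b := by
        rw [← hgo]
        simp only [hw, wsub, List.getElem_take, List.getElem_drop]
      set j := ((sWord d).take (p+o+1)).count ABC.b with hjj
      have hj1 : 1 ≤ j := by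
        have hmem : ABC.b ∈ (sWord d).take (p+o+1) := by
          rw [List.mem_iff_getElem]
          refine ⟨p+o, by simp [List.length_take]; omega, ?_⟩
          simp only [List.getElem_take]
          exact hso
        have := List.count_pos_iff.2 hmem
        omega
      have hj2 : j ≤ d := by
        have := (List.take_sublist (p+o+1) (sWord d)).count_le ABC.b
        rw [count_sWord] at this
        omega
      have hpb : pb j = p + o := by
        apply getB d (p+o) hpo
        rw [List.getElem?_eq_getElem hpo, hso]
      have hcode : code d k p = d * o + (j - 1) := by
        rw [code, if_neg hp0, if_pos hb]
      have hbound : d * o + (j - 1) < d * k := by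
        have h1 : d * o + (j - 1) < d * (o + 1) := by
          rw [Nat.mul_add, Nat.mul_one]; omega
        have h2 : d * (o + 1) ≤ d * k := Nat.mul_le_mul_left d (by omega)
        omega
      refine ⟨by omega, ?_⟩
      rw [hcode, deco, if_neg (by omega), if_neg (by omega)]
      have hdiv : (d * o + (j - 1)) / d = o := by
        rw [Nat.mul_add_div (by omega), Nat.div_eq_of_lt (by omega), Nat.add_zero]
      have hmod : (d * o + (j - 1)) % d + 1 = j := by
        rw [Nat.mul_add_mod, Nat.mod_eq_of_lt (by omega)]; omega
      rw [hdiv, hmod, hpb]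
      -- key decomposition
      have hkey : (sWord d).drop p = List.replicate o ABC.a ++ ABC.b :: (sWord d).drop (p+o+1) := by
        have h1 : ((sWord d).drop p).drop o = ABC.b :: (sWord d).drop (p+o+1) := by
          rw [List.drop_drop, List.drop_eq_getElem_cons (by omega : p + o < (sWord d).length)]
          rw [hso]
        have h2 : ((sWord d).drop p).take o = List.replicate o ABC.a := by
          rw [List.eq_replicate_iff]
          constructor
          · simp only [List.length_take, List.length_drop]; omega
          · intro x hx
            have hxd1 : x ∈ (sWord d).drop 1 := by
              have hsub : (((sWord d).drop p).take o).Sublist ((sWord d).drop 1) := by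
                have hdp : (sWord d).drop p = ((sWord d).drop 1).drop (p-1) := by
                  rw [List.drop_drop]; congr 1; omega
                rw [hdp]
                exact (List.take_sublist _ _).trans (List.drop_sublist _ _)
              exact hsub.mem hx
            have hxne : x ≠ ABC.b := by
              rw [List.mem_iff_getElem] at hx
              obtain ⟨i, hi, hix⟩ := hx
              have hio : i < o := by
                simp only [List.length_take, List.length_drop] at hi; omega
              have hiw : i < w.length := by omega
              have hxw : x = w[i]'hiw := by
                rw [← hix]
                simp only [hw, wsub, List.getElem_take]
              have hfi : i < List.findIdx (· == ABC.b) w := hio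
              have := List.not_of_lt_findIdx hfi
              simp only [beq_eq_false_iff_ne] at this
              rw [hxw]
              exact this
            rcases mem_drop_one d x hxd1 with h | h
            · exact h
            · exact absurd h hxne
        calc (sWord d).drop p
            = ((sWord d).drop p).take o ++ ((sWord d).drop p).drop o :=
              (List.take_append_drop o _).symm
          _ = List.replicate o ABC.a ++ ABC.b :: (sWord d).drop (p+o+1) := by rw [h1, h2]
      rw [← hkey, hw, wsub]
    · -- substring is all a's
      have hcode : code d k p = d*k+1 := by rw [code, if_neg hp0, if_neg hb]
      refine ⟨by omega, ?_⟩
      rw [hcode, deco, if_neg (by omega), if_pos rfl]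
      have hwlen : (wsub d k p).length = k := by
        simp only [wsub, List.length_take, List.length_drop]; omega
      symm
      rw [List.eq_replicate_iff]
      refine ⟨hwlen, ?_⟩
      intro x hx
      have hxd1 : x ∈ (sWord d).drop 1 := by
        have hsub : (wsub d k p).Sublist ((sWord d).drop 1) := by
          have hdp : (sWord d).drop p = ((sWord d).drop 1).drop (p-1) := by
            rw [List.drop_drop]; congr 1; omega
          rw [wsub, hdp]
          exact (List.take_sublist _ _).trans (List.drop_sublist _ _)
        exact hsub.mem hx
      rcases mem_drop_one d x hxd1 with h | h
      · exact h
      · rw [h] at hx; exact absurd hx hb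

/-- for d ≥ 1 and every 1 ≤ k ≤ |s_d|, the number of distinct
    length-k substrings of s_d is at most d·k + 2; consequently
    max_k P_{s_d}(k)/k ≤ d + 2 (i.e., P_{s_d}(k) ≤ (d+2)·k for all such k). -/
theorem stmt2 (d : ℕ) (hd : 1 ≤ d) :
    ∀ k : ℕ, 1 ≤ k → k ≤ (sWord d).length →
      numSubstr (sWord d) k ≤ d * k + 2 ∧ numSubstr (sWord d) k ≤ (d + 2) * k := by
  intro k hk hkl
  have key : numSubstr (sWord d) k ≤ d * k + 2 := by
    unfold numSubstr
    have himg : (Finset.range ((sWord d).length - k + 1)).image (fun p => ((sWord d).drop p).take k)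
        = ((Finset.range ((sWord d).length - k + 1)).image (code d k)).image (deco d k) := by
      rw [Finset.image_image]
      apply Finset.image_congr
      intro p hp
      simp only [Finset.mem_coe, Finset.mem_range] at hp
      exact ((main_lemma d k hd hk hkl p hp).2).symm
    rw [himg]
    calc (((Finset.range ((sWord d).length - k + 1)).image (code d k)).image (deco d k)).card
        ≤ ((Finset.range ((sWord d).length - k + 1)).image (code d k)).card :=
          Finset.card_image_le
      _ ≤ (Finset.range (d*k+2)).card := by
          apply Finset.card_le_card
          intro c hc
          simp only [Finset.mem_image, Finset.mem_range] at hc ⊢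
          obtain ⟨p, hp, rfl⟩ := hc
          exact (main_lemma d k hd hk hkl p hp).1
      _ = d*k+2 := Finset.card_range _
  refine ⟨key, le_trans key ?_⟩
  have h2 : (d+2)*k = d*k + 2*k := by ring
  rw [h2]
  exact Nat.add_le_add_left (by omega) (d*k)
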